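/- Let K be a field of characteristic 2, t ≥ 4 an odd natural number, and b, c ∈ K nonzero with b^{t−3} = c^{t−3}. Then the map α ↦ b^{−1}cα, β ↦ b^{−1}cβ, γ ↦ b^{−1}cγ, η ↦ b^{−1}cη induces a K-algebra isomorphism Q(2B)_3^t(b) → Q(2B)_3^t(c). -/

import Mathlib

/- The algebra Q(2B)_3^t(a,b): quiver with vertices 1,2, loop α at 1, loop η
   at 2, arrows β : 1 → 2, γ : 2 → 1, with relations
   αβ = βη, ηγ = γα, α² = βγ + bα³, γβ = aη^{t−1}, α⁴ = 0, η^{t+1} = 0,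
   γα² = 0, α²β = 0.  Q(2B)_3^t(b) := Q(2B)_3^t(1,b). -/

namespace SocleWSA9

variable (K : Type) [Field K]

/-- Generators: 0 = e₁, 1 = e₂, 2 = α, 3 = β, 4 = γ, 5 = η. -/
noncomputable def e1 : FreeAlgebra K (Fin 6) := FreeAlgebra.ι K 0
noncomputable def e2 : FreeAlgebra K (Fin 6) := FreeAlgebra.ι K 1
noncomputable def al : FreeAlgebra K (Fin 6) := FreeAlgebra.ι K 2
noncomputable def be : FreeAlgebra K (Fin 6) := FreeAlgebra.ι K 3
noncomputable def ga : FreeAlgebra K (Fin 6) := FreeAlgebra.ι K 4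
noncomputable def et : FreeAlgebra K (Fin 6) := FreeAlgebra.ι K 5

inductive QBRel (t : ℕ) (a b : K) : FreeAlgebra K (Fin 6) → FreeAlgebra K (Fin 6) → Prop
  | unit : QBRel t a b (e1 K + e2 K) 1
  | idem1 : QBRel t a b (e1 K * e1 K) (e1 K)
  | idem2 : QBRel t a b (e2 K * e2 K) (e2 K)
  | orth12 : QBRel t a b (e1 K * e2 K) 0
  | orth21 : QBRel t a b (e2 K * e1 K) 0
  | sal : QBRel t a b (e1 K * al K) (al K)
  | tal : QBRel t a b (al K * e1 K) (al K)
  | sbe : QBRel t a b (e1 K * be K) (be K)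
  | tbe : QBRel t a b (be K * e2 K) (be K)
  | sga : QBRel t a b (e2 K * ga K) (ga K)
  | tga : QBRel t a b (ga K * e1 K) (ga K)
  | set : QBRel t a b (e2 K * et K) (et K)
  | tet : QBRel t a b (et K * e2 K) (et K)
  | r1 : QBRel t a b (al K * be K) (be K * et K)
  | r2 : QBRel t a b (et K * ga K) (ga K * al K)
  | r3 : QBRel t a b (al K * al K) (be K * ga K + b • al K ^ 3)
  | r4 : QBRel t a b (ga K * be K) (a • et K ^ (t - 1))
  | r5 : QBRel t a b (al K ^ 4) 0
  | r6 : QBRel t a b (et K ^ (t + 1)) 0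
  | r7 : QBRel t a b (ga K * (al K * al K)) 0
  | r8 : QBRel t a b (al K * al K * be K) 0

/-- The canonical projection onto `Q(2B)_3^t(a,b)`. -/
noncomputable def pi (t : ℕ) (a b : K) :
    FreeAlgebra K (Fin 6) →ₐ[K] RingQuot (QBRel K t a b) :=
  RingQuot.mkAlgHom K (QBRel K t a b)

end SocleWSA9

/-!
Scaling every arrow by `l` multiplies a path of length `n` by `lⁿ`, so it preserves the
homogeneous relations and turns `α² = βγ + bα³` into `α² = βγ + (bl)α³` and
`γβ = aη^{t-1}` into `γβ = a l^{t-3} η^{t-1}`. For `l = b⁻¹c` we have `bl = c` and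
`l^{t-3} = 1`, so scaling maps `Q(2B)_3^t(b)` to `Q(2B)_3^t(c)`, with inverse the scaling by `l⁻¹`.
-/

namespace SocleWSA9

variable {K : Type} [Field K]

noncomputable def scaleArrows (l : K) : FreeAlgebra K (Fin 6) →ₐ[K] FreeAlgebra K (Fin 6) :=
  FreeAlgebra.lift K fun i => ![1, 1, l, l, l, l] i • FreeAlgebra.ι K i

section scaleArrows

variable (l : K)

@[simp] lemma scaleArrows_e1 : scaleArrows l (e1 K) = e1 K := by simp [scaleArrows, e1]
@[simp] lemma scaleArrows_e2 : scaleArrows l (e2 K) = e2 K := by simp [scaleArrows, e2]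
@[simp] lemma scaleArrows_al : scaleArrows l (al K) = l • al K := by simp [scaleArrows, al]
@[simp] lemma scaleArrows_be : scaleArrows l (be K) = l • be K := by simp [scaleArrows, be]
@[simp] lemma scaleArrows_ga : scaleArrows l (ga K) = l • ga K := by simp [scaleArrows, ga]
@[simp] lemma scaleArrows_et : scaleArrows l (et K) = l • et K := by simp [scaleArrows, et]

lemma scaleArrows_comp (m : K) : (scaleArrows m).comp (scaleArrows l) = scaleArrows (m * l) := by
  ext i
  fin_cases i <;> simp [scaleArrows, smul_smul, mul_comm]

lemma scaleArrows_one : scaleArrows (1 : K) = AlgHom.id K _ := by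
  ext i
  fin_cases i <;> simp [scaleArrows]

end scaleArrows

variable {t : ℕ} {a b a' c l : K}

lemma pi_eq_of_rel {x y : FreeAlgebra K (Fin 6)} (h : QBRel K t a b x y) :
    pi K t a b x = pi K t a b y :=
  RingQuot.mkAlgHom_rel K h

lemma pi_scaleArrows_eq_of_rel (hb : b * l ^ 3 = c * l ^ 2) (ha : a * l ^ (t - 1) = a' * l ^ 2)
    {x y : FreeAlgebra K (Fin 6)} (h : QBRel K t a b x y) :
    pi K t a' c (scaleArrows l x) = pi K t a' c (scaleArrows l y) := by
  cases h
  case r3 =>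
    have r3 := pi_eq_of_rel (QBRel.r3 (t := t) (a := a') (b := c))
    simp only [map_mul, map_add, map_pow, map_smul, scaleArrows_al, scaleArrows_be,
      scaleArrows_ga, smul_mul_smul_comm, smul_pow, smul_smul] at r3 ⊢
    rw [r3, hb]
    module
  case r4 =>
    have r4 := pi_eq_of_rel (QBRel.r4 (t := t) (a := a') (b := c))
    simp only [map_mul, map_pow, map_smul, scaleArrows_be, scaleArrows_ga, scaleArrows_et,
      smul_mul_smul_comm, smul_pow, smul_smul] at r4 ⊢
    rw [r4, ha]
    module
  -- The remaining relations are homogeneous: both sides pick up the same power of `l`.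
  all_goals
    simp only [map_mul, map_add, map_pow, map_smul, scaleArrows_e1, scaleArrows_e2,
      scaleArrows_al, scaleArrows_be, scaleArrows_ga, scaleArrows_et, smul_mul_assoc,
      mul_smul_comm, smul_pow, smul_smul]
    simp only [← map_mul, ← map_pow, ← map_smul, ← map_add]
    first
    | exact pi_eq_of_rel (by constructor)
    | exact (pi_eq_of_rel (by constructor)).trans (by simp)
    | simp only [map_smul]; exact congrArg (_ • ·) (pi_eq_of_rel (by constructor))
    | simp only [map_smul]
      exact (congrArg (_ • ·) (pi_eq_of_rel (by constructor))).trans (by simp)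

variable (t a b a' c l) in
noncomputable def scaleHom (hb : b * l ^ 3 = c * l ^ 2) (ha : a * l ^ (t - 1) = a' * l ^ 2) :
    RingQuot (QBRel K t a b) →ₐ[K] RingQuot (QBRel K t a' c) :=
  RingQuot.liftAlgHom K
    ⟨(pi K t a' c).comp (scaleArrows l), fun _ _ h => pi_scaleArrows_eq_of_rel hb ha h⟩

lemma scaleHom_pi (hb : b * l ^ 3 = c * l ^ 2) (ha : a * l ^ (t - 1) = a' * l ^ 2)
    (x : FreeAlgebra K (Fin 6)) :
    scaleHom t a b a' c l hb ha (pi K t a b x) = pi K t a' c (scaleArrows l x) :=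
  RingQuot.liftAlgHom_mkAlgHom_apply K _ _ x

lemma scaleHom_comp_scaleHom {m : K} (hml : m * l = 1)
    (hb : b * l ^ 3 = c * l ^ 2) (ha : a * l ^ (t - 1) = a' * l ^ 2)
    (hc : c * m ^ 3 = b * m ^ 2) (ha' : a' * m ^ (t - 1) = a * m ^ 2) :
    (scaleHom t a' c a b m hc ha').comp (scaleHom t a b a' c l hb ha) = AlgHom.id K _ := by
  apply RingQuot.ringQuot_ext' K
  refine AlgHom.ext fun x => ?_
  change scaleHom t a' c a b m hc ha' (scaleHom t a b a' c l hb ha (pi K t a b x)) = pi K t a b x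
  rw [scaleHom_pi, scaleHom_pi, ← AlgHom.comp_apply (scaleArrows m), scaleArrows_comp, hml,
    scaleArrows_one, AlgHom.id_apply]

variable (t a b a' c) in
noncomputable def scaleEquiv (hl : l ≠ 0) (hb : b * l = c)
    (ha : a * l ^ (t - 1) = a' * l ^ 2) :
    RingQuot (QBRel K t a b) ≃ₐ[K] RingQuot (QBRel K t a' c) :=
  have hb3 : b * l ^ 3 = c * l ^ 2 := by rw [← hb]; ring
  have hc3 : c * l⁻¹ ^ 3 = b * l⁻¹ ^ 2 := by rw [← hb]; field_simp
  have ha' : a' * l⁻¹ ^ (t - 1) = a * l⁻¹ ^ 2 := by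
    simp only [inv_pow]
    field_simp
    linear_combination -ha
  AlgEquiv.ofAlgHom (scaleHom t a b a' c l hb3 ha) (scaleHom t a' c a b l⁻¹ hc3 ha')
    (scaleHom_comp_scaleHom (mul_inv_cancel₀ hl) hc3 ha' hb3 ha)
    (scaleHom_comp_scaleHom (inv_mul_cancel₀ hl) hb3 ha hc3 ha')

lemma scaleEquiv_pi (hl : l ≠ 0) (hb : b * l = c)
    (ha : a * l ^ (t - 1) = a' * l ^ 2) (x : FreeAlgebra K (Fin 6)) :
    scaleEquiv t a b a' c hl hb ha (pi K t a b x) = pi K t a' c (scaleArrows l x) :=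
  scaleHom_pi _ ha x

end SocleWSA9

open SocleWSA9 in
theorem socle_wsa_stmt9_general (K : Type) [Field K]
    (t : ℕ) (ht : 4 ≤ t) (b c : K) (hb : b ≠ 0) (hc : c ≠ 0)
    (hbc : b ^ (t - 3) = c ^ (t - 3)) :
    ∃ h : RingQuot (QBRel K t 1 b) ≃ₐ[K] RingQuot (QBRel K t 1 c),
      h (pi K t 1 b (al K)) = (b⁻¹ * c) • pi K t 1 c (al K) ∧
      h (pi K t 1 b (be K)) = (b⁻¹ * c) • pi K t 1 c (be K) ∧
      h (pi K t 1 b (ga K)) = (b⁻¹ * c) • pi K t 1 c (ga K) ∧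
      h (pi K t 1 b (et K)) = (b⁻¹ * c) • pi K t 1 c (et K) := by
  have hl : b⁻¹ * c ≠ 0 := mul_ne_zero (inv_ne_zero hb) hc
  have hpow : (b⁻¹ * c) ^ (t - 3) = 1 := by
    rw [mul_pow, inv_pow, hbc, inv_mul_cancel₀ (pow_ne_zero _ hc)]
  have hsq : 1 * (b⁻¹ * c) ^ (t - 1) = 1 * (b⁻¹ * c) ^ 2 := by
    rw [show t - 1 = t - 3 + 2 by omega, pow_add, hpow, one_mul]
  refine ⟨scaleEquiv t 1 b 1 c hl (mul_inv_cancel_left₀ hb c) hsq, ?_, ?_, ?_, ?_⟩ <;>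
    simp only [scaleEquiv_pi, scaleArrows_al, scaleArrows_be, scaleArrows_ga, scaleArrows_et,
      map_smul]

open SocleWSA9 in
/-- Let `K` be a field of characteristic 2, `t ≥ 4` odd,
`b, c ∈ K` nonzero with `b^{t−3} = c^{t−3}`.  Then `α ↦ b⁻¹cα`, `β ↦ b⁻¹cβ`,
`γ ↦ b⁻¹cγ`, `η ↦ b⁻¹cη` induces a `K`-algebra isomorphism
`Q(2B)_3^t(b) → Q(2B)_3^t(c)`. -/
theorem socle_wsa_stmt9 (K : Type) [Field K] (hchar : CharP K 2)
    (t : ℕ) (ht : 4 ≤ t) (hodd : Odd t) (b c : K) (hb : b ≠ 0) (hc : c ≠ 0)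
    (hbc : b ^ (t - 3) = c ^ (t - 3)) :
    ∃ h : RingQuot (QBRel K t 1 b) ≃ₐ[K] RingQuot (QBRel K t 1 c),
      h (pi K t 1 b (al K)) = (b⁻¹ * c) • pi K t 1 c (al K) ∧
      h (pi K t 1 b (be K)) = (b⁻¹ * c) • pi K t 1 c (be K) ∧
      h (pi K t 1 b (ga K)) = (b⁻¹ * c) • pi K t 1 c (ga K) ∧
      h (pi K t 1 b (et K)) = (b⁻¹ * c) • pi K t 1 c (et K) :=
  socle_wsa_stmt9_general K t ht b c hb hc hbc
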